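/- For every positive integer n, g(2n) = g(n) + v(n)/2 and g(2n+1) = g(n), where g(n) = n(n+2)/3 - G(n) and v(n) = V(n) - 2n/3. -/
import Mathlib


open Finset

/-- The largest odd divisor of `k`. -/
def oddPart (k : ℕ) : ℕ := ordCompl[2] k

/-- `V n = ∑_{k=1}^n α(k)/k` as a rational number. -/
def V (n : ℕ) : ℚ := ∑ k ∈ Finset.Icc 1 n, (oddPart k : ℚ) / k

/-- `v n = V n - 2n/3`. -/
def v (n : ℕ) : ℚ := V n - 2 * n / 3

/-- `U n = ∑_{k=1}^n α(k)`. -/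
def U (n : ℕ) : ℕ := ∑ k ∈ Finset.Icc 1 n, oddPart k

/-- `G n = ∑_{k=1}^n (n+1-k)·α(k)/k` as a rational number. -/
def G (n : ℕ) : ℚ := ∑ k ∈ Finset.Icc 1 n, ((n : ℚ) + 1 - k) * (oddPart k : ℚ) / k

/-- `g n = n(n+2)/3 - G n`. -/
def g (n : ℕ) : ℚ := n * (n + 2) / 3 - G n

lemma oddPart_two_mul (k : ℕ) : oddPart (2 * k) = oddPart k := by
  unfold oddPart
  rw [Nat.ordCompl_mul]
  have : ordCompl[2] 2 = 1 := by
    rw [Nat.Prime.factorization_self Nat.prime_two]; norm_num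
  rw [this, one_mul]

lemma oddPart_odd (k : ℕ) (h : Odd k) : oddPart k = k := by
  unfold oddPart
  rw [Nat.factorization_eq_zero_of_not_dvd]
  · simp
  · rw [Nat.odd_iff] at h; omega

lemma oddPart_one : oddPart 1 = 1 := oddPart_odd 1 odd_one

lemma V_succ (n : ℕ) : V (n+1) = V n + (oddPart (n+1) : ℚ) / (n+1) := by
  unfold V
  rw [Finset.sum_Icc_succ_top (by omega)]
  push_cast
  ring

lemma V_two_mul (n : ℕ) : V (2*n) = n + V n / 2 := by
  induction n with
  | zero => simp [V]
  | succ n ih =>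
    have e1 : 2*(n+1) = (2*n+1)+1 := by ring
    rw [e1, V_succ, V_succ, ih, V_succ]
    rw [oddPart_odd (2*n+1) (odd_two_mul_add_one n)]
    have e2 : (2*n+1)+1 = 2*(n+1) := by ring
    rw [e2, oddPart_two_mul (n+1)]
    have h : ((n:ℚ)+1) ≠ 0 := by positivity
    have h2 : (2*(n:ℚ)+1) ≠ 0 := by positivity
    push_cast
    field_simp
    ring

lemma G_succ (n : ℕ) : G (n+1) = G n + V (n+1) := by
  have h1 : G (n+1)
      = ∑ k ∈ Finset.Icc 1 (n+1), (((n:ℚ) + 1 - k) * (oddPart k : ℚ) / k + (oddPart k : ℚ)/k) := by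
    unfold G
    refine Finset.sum_congr rfl fun k _ => ?_
    push_cast
    ring
  rw [h1, Finset.sum_add_distrib]
  have h2 : (∑ k ∈ Finset.Icc 1 (n+1), ((n:ℚ) + 1 - k) * (oddPart k : ℚ) / k) = G n := by
    rw [Finset.sum_Icc_succ_top (by omega)]
    unfold G
    push_cast
    ring_nf
  rw [h2]
  rfl

lemma g_succ (n : ℕ) : g (n+1) = g n + (2*(n:ℚ)+3)/3 - V (n+1) := by
  unfold g
  rw [G_succ]
  push_cast
  ring

lemma g_zero : g 0 = 0 := by simp [g, G]
lemma V_one : V 1 = 1 := by simp [V, oddPart_one]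

lemma key (n : ℕ) : g (2*n+1) = g n ∧ g (2*n+2) = g (n+1) + v (n+1)/2 := by
  induction n with
  | zero =>
    constructor
    · have := g_succ 0
      rw [V_one] at this
      simp at this
      simpa [g_zero] using this
    · have h1 : g 1 = 0 := by
        have := g_succ 0; rw [V_one] at this; simp [g_zero] at this; simpa [g_zero]
      have h2 : V 2 = 3/2 := by
        have := V_two_mul 1; rw [V_one] at this; norm_num at this; simpa
      have h3 := g_succ 1
      rw [show (1:ℕ)+1 = 2 from rfl, h2, h1] at h3
      rw [show 2*0+2 = 2 from rfl, show (0:ℕ)+1 = 1 from rfl, h3, h1]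
      simp [v, V_one]
      norm_num
  | succ n ih =>
    obtain ⟨ih1, ih2⟩ := ih
    have hV1 : V (2*n+3) = (n:ℚ) + 2 + V (n+1) / 2 := by
      have e : (2*n+3) = 2*(n+1)+1 := by ring
      rw [e, show 2*(n+1)+1 = (2*(n+1))+1 from rfl, V_succ, V_two_mul,
        oddPart_odd (2*(n+1)+1) (odd_two_mul_add_one (n+1))]
      have h2 : (2*((n:ℚ)+1)+1) ≠ 0 := by positivity
      push_cast
      field_simp
      ring
    have hV2 : V (2*n+4) = (n:ℚ) + 2 + V (n+2) / 2 := by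
      have e : (2*n+4) = 2*(n+2) := by ring
      rw [e, V_two_mul]
      push_cast
      ring
    have hgodd : g (2*n+3) = g (2*n+2) + (2*(2*(n:ℚ)+2)+3)/3 - V (2*n+3) := by
      have := g_succ (2*n+2)
      rw [show 2*n+2+1 = 2*n+3 from rfl] at this
      rw [this]; push_cast; ring
    have hgeven : g (2*n+4) = g (2*n+3) + (2*(2*(n:ℚ)+3)+3)/3 - V (2*n+4) := by
      have := g_succ (2*n+3)
      rw [show 2*n+3+1 = 2*n+4 from rfl] at this
      rw [this]; push_cast; ring
    have hg2 : g (n+2) = g (n+1) + (2*((n:ℚ)+1)+3)/3 - V (n+2) := by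
      have := g_succ (n+1); rw [this]; push_cast; ring
    have hodd : g (2*(n+1)+1) = g (n+1) := by
      rw [show 2*(n+1)+1 = 2*n+3 from by ring, hgodd, hV1, ih2]
      unfold v
      push_cast
      ring
    refine ⟨hodd, ?_⟩
    rw [show 2*(n+1)+2 = 2*n+4 from by ring, hgeven,
      show 2*n+3 = 2*(n+1)+1 from by ring, hodd, hV2, hg2]
    unfold v
    push_cast
    ring

theorem stmt15 (n : ℕ) (hn : 0 < n) :
    g (2 * n) = g n + v n / 2 ∧ g (2 * n + 1) = g n := by
  obtain ⟨m, rfl⟩ := Nat.exists_eq_add_of_lt hn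
  constructor
  · have := (key m).2
    rw [show 2*m+2 = 2*(0+m+1) from by ring, show m+1 = 0+m+1 from by ring] at this
    exact this
  · have := (key (0+m+1)).1
    exact this
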